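/- Let M be a nonsingular n×n real symmetric matrix and let α be a set of indices of cardinality at least two such that every two-element subset of α is a P-set of M. Then α is a P-set of M. -/
import Mathlib


open Matrix

/-- The nullity of a square real matrix. -/
noncomputable def Matrix.nullity {ι : Type*} [Fintype ι] (A : Matrix ι ι ℝ) : ℕ :=
  Fintype.card ι - A.rank

/-- `A.subOn s` is the principal submatrix of `A` on the rows and columns indexed
by `s`; thus `A.subOn sᶜ` is the matrix `A(s)` obtained by deleting the rows and
columns indexed by `s`. -/
def Matrix.subOn {ι : Type*} (A : Matrix ι ι ℝ) (s : Finset ι) : Matrix s s ℝ :=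
  A.submatrix Subtype.val Subtype.val

/-- `α` is a P-set of `A` if deleting the rows and columns indexed by `α`
increases the nullity by `|α|`. -/
def Matrix.IsPSet {ι : Type*} [Fintype ι] [DecidableEq ι] (A : Matrix ι ι ℝ)
    (α : Finset ι) : Prop :=
  (A.subOn αᶜ).nullity = A.nullity + α.card


set_option linter.unusedVariables false
set_option linter.unusedSectionVars false

open Module

section PSetAux

variable {ι : Type*} [Fintype ι] [DecidableEq ι]

/-- Extension by zero from a finset, as a linear map. -/
def extZero (t : Finset ι) : (↥t → ℝ) →ₗ[ℝ] (ι → ℝ) where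
  toFun v i := if h : i ∈ t then v ⟨i, h⟩ else 0
  map_add' u v := by ext i; by_cases h : i ∈ t <;> simp [h]
  map_smul' c v := by ext i; by_cases h : i ∈ t <;> simp [h]

lemma extZero_mem {t : Finset ι} (v : ↥t → ℝ) {i : ι} (h : i ∈ t) :
    extZero t v i = v ⟨i, h⟩ := dif_pos h

lemma extZero_notMem {t : Finset ι} (v : ↥t → ℝ) {i : ι} (h : i ∉ t) :
    extZero t v i = 0 := dif_neg h

lemma subOn_mulVec (A : Matrix ι ι ℝ) (t : Finset ι) (v : ↥t → ℝ) (j : ↥t) :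
    (A.subOn t).mulVec v j = ∑ k : ↥t, A j.val k.val * v k := rfl

lemma mulVec_extZero (A : Matrix ι ι ℝ) (t : Finset ι) (v : ↥t → ℝ) (i : ι) :
    A.mulVec (extZero t v) i = ∑ k : ↥t, A i k.val * v k := by
  calc A.mulVec (extZero t v) i = ∑ k : ι, A i k * extZero t v k := rfl
  _ = ∑ k ∈ t, A i k * extZero t v k :=
      (Finset.sum_subset (Finset.subset_univ t)
        (fun k _ hk => by simp [extZero_notMem _ hk])).symm
  _ = ∑ k : ↥t, A i k.val * extZero t v k.val := (Finset.sum_coe_sort t _).symm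
  _ = ∑ k : ↥t, A i k.val * v k := by
      refine Finset.sum_congr rfl fun k _ => ?_
      rw [extZero_mem v k.2]

lemma mulVec_extZero_mem (A : Matrix ι ι ℝ) (t : Finset ι) (v : ↥t → ℝ) {i : ι} (h : i ∈ t) :
    A.mulVec (extZero t v) i = (A.subOn t).mulVec v ⟨i, h⟩ := by
  rw [mulVec_extZero, subOn_mulVec]

/-- The map sending `v` in the kernel of `M(s)` to `(M·ṽ)|ₛ`. -/
noncomputable def kerToS (M : Matrix ι ι ℝ) (s : Finset ι) :
    ↥(LinearMap.ker (M.subOn sᶜ).mulVecLin) →ₗ[ℝ] (↥s → ℝ) :=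
  (LinearMap.funLeft ℝ ℝ (fun j : ↥s => (j : ι))) ∘ₗ M.mulVecLin ∘ₗ
    (extZero sᶜ) ∘ₗ (LinearMap.ker (M.subOn sᶜ).mulVecLin).subtype

lemma kerToS_apply (M : Matrix ι ι ℝ) (s : Finset ι)
    (v : ↥(LinearMap.ker (M.subOn sᶜ).mulVecLin)) (j : ↥s) :
    kerToS M s v j = M.mulVec (extZero sᶜ v.val) j.val := rfl

lemma kerToS_injective {M N : Matrix ι ι ℝ} (hNM : N * M = 1) (s : Finset ι) :
    Function.Injective (kerToS M s) := by
  rw [← LinearMap.ker_eq_bot, eq_bot_iff]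
  intro v hv
  have hv0 : kerToS M s v = 0 := hv
  have hw : M.mulVec (extZero sᶜ v.val) = 0 := by
    funext i
    by_cases h : i ∈ s
    · exact congr_fun hv0 ⟨i, h⟩
    · have hi : i ∈ sᶜ := Finset.mem_compl.mpr h
      rw [mulVec_extZero_mem M sᶜ v.val hi]
      have := v.2
      rw [LinearMap.mem_ker, Matrix.mulVecLin_apply] at this
      rw [this]; rfl
  have hext : extZero sᶜ v.val = 0 := by
    have : N.mulVec (M.mulVec (extZero sᶜ v.val)) = extZero sᶜ v.val := by
      rw [Matrix.mulVec_mulVec, hNM, Matrix.one_mulVec]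
    rw [hw, Matrix.mulVec_zero] at this
    exact this.symm
  have : v.val = 0 := by
    funext k
    have := congr_fun hext k.val
    rwa [extZero_mem v.val k.2, Subtype.eta] at this
  simpa [Submodule.mem_bot] using Subtype.ext this

lemma nullity_eq_finrank_ker (A : Matrix ι ι ℝ) :
    A.nullity = finrank ℝ (LinearMap.ker A.mulVecLin) := by
  have h := LinearMap.finrank_range_add_finrank_ker A.mulVecLin
  rw [Module.finrank_fintype_fun_eq_card] at h
  have hrank : A.rank = finrank ℝ (LinearMap.range A.mulVecLin) := rfl
  unfold Matrix.nullity
  omega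

lemma finrank_ker_le {M N : Matrix ι ι ℝ} (hNM : N * M = 1) (s : Finset ι) :
    finrank ℝ (LinearMap.ker (M.subOn sᶜ).mulVecLin) ≤ s.card := by
  calc finrank ℝ (LinearMap.ker (M.subOn sᶜ).mulVecLin)
      = finrank ℝ (LinearMap.range (kerToS M s)) :=
        (LinearMap.finrank_range_of_inj (kerToS_injective hNM s)).symm
  _ ≤ finrank ℝ (↥s → ℝ) := Submodule.finrank_le _
  _ = s.card := by rw [Module.finrank_fintype_fun_eq_card, Fintype.card_coe]

lemma le_finrank_ker {M N : Matrix ι ι ℝ} (hMN : M * N = 1) (s : Finset ι)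
    (hNs : N.subOn s = 0) :
    s.card ≤ finrank ℝ (LinearMap.ker (M.subOn sᶜ).mulVecLin) := by
  set K := LinearMap.ker (M.subOn sᶜ).mulVecLin
  -- w(c) := N ·(ĉ) vanishes on s
  have hws : ∀ (c : ↥s → ℝ) (k : ι), k ∈ s → N.mulVec (extZero s c) k = 0 := by
    intro c k hk
    rw [mulVec_extZero_mem N s c hk, hNs, Matrix.zero_mulVec]
    simp
  have hMw : ∀ (c : ↥s → ℝ), M.mulVec (N.mulVec (extZero s c)) = extZero s c := by
    intro c
    rw [Matrix.mulVec_mulVec, hMN, Matrix.one_mulVec]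
  set ψ0 : (↥s → ℝ) →ₗ[ℝ] (↥(sᶜ) → ℝ) :=
    (LinearMap.funLeft ℝ ℝ (fun j : ↥(sᶜ) => (j : ι))) ∘ₗ N.mulVecLin ∘ₗ (extZero s) with hψ0
  have hmem : ∀ c, ψ0 c ∈ K := by
    intro c
    rw [LinearMap.mem_ker, Matrix.mulVecLin_apply]
    funext j
    rw [subOn_mulVec]
    have : ∀ k : ↥(sᶜ), M j.val k.val * (ψ0 c) k
        = M j.val k.val * N.mulVec (extZero s c) k.val := fun k => rfl
    rw [Finset.sum_congr rfl (fun k _ => this k)]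
    have hsplit : ∑ k : ↥(sᶜ), M j.val k.val * N.mulVec (extZero s c) k.val
        = ∑ k ∈ sᶜ, M j.val k * N.mulVec (extZero s c) k :=
      Finset.sum_coe_sort sᶜ (fun k => M j.val k * N.mulVec (extZero s c) k)
    rw [hsplit]
    have htotal : ∑ k ∈ s, (fun k => M j.val k * N.mulVec (extZero s c) k) k
        + ∑ k ∈ sᶜ, (fun k => M j.val k * N.mulVec (extZero s c) k) k
        = ∑ k : ι, M j.val k * N.mulVec (extZero s c) k :=
      Finset.sum_add_sum_compl s _
    have hzero : ∑ k ∈ s, M j.val k * N.mulVec (extZero s c) k = 0 :=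
      Finset.sum_eq_zero fun k hk => by rw [hws c k hk, mul_zero]
    have hfull : ∑ k : ι, M j.val k * N.mulVec (extZero s c) k
        = M.mulVec (N.mulVec (extZero s c)) j.val := rfl
    have hj : (j : ι) ∉ s := Finset.mem_compl.mp j.2
    have : (0:ℝ) + ∑ k ∈ sᶜ, M j.val k * N.mulVec (extZero s c) k
        = extZero s c j.val := by
      rw [← hzero]
      rw [htotal, hfull, hMw]
    rw [extZero_notMem c hj] at this
    simpa using this
  set ψ : (↥s → ℝ) →ₗ[ℝ] K := ψ0.codRestrict K hmem with hψ
  have hinj : Function.Injective ψ := by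
    rw [← LinearMap.ker_eq_bot, eq_bot_iff]
    intro c hc
    have hc0 : ψ0 c = 0 := congrArg Subtype.val (show ψ c = 0 from hc)
    have hwzero : N.mulVec (extZero s c) = 0 := by
      funext k
      by_cases hk : k ∈ s
      · exact hws c k hk
      · have hk' : k ∈ sᶜ := Finset.mem_compl.mpr hk
        have := congr_fun hc0 ⟨k, hk'⟩
        exact this
    have hext : extZero s c = 0 := by
      have := hMw c
      rw [hwzero, Matrix.mulVec_zero] at this
      exact this.symm
    have : c = 0 := by
      funext k
      have := congr_fun hext k.val
      rwa [extZero_mem c k.2, Subtype.eta] at this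
    simpa [Submodule.mem_bot] using this
  calc s.card = finrank ℝ (↥s → ℝ) := by
        rw [Module.finrank_fintype_fun_eq_card, Fintype.card_coe]
  _ = finrank ℝ (LinearMap.range ψ) := (LinearMap.finrank_range_of_inj hinj).symm
  _ ≤ finrank ℝ K := Submodule.finrank_le _

lemma subOn_inv_eq_zero {M N : Matrix ι ι ℝ} (hMN : M * N = 1) (hNM : N * M = 1)
    (s : Finset ι)
    (h : finrank ℝ (LinearMap.ker (M.subOn sᶜ).mulVecLin) = s.card) :
    N.subOn s = 0 := by
  set K := LinearMap.ker (M.subOn sᶜ).mulVecLin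
  have hinj := kerToS_injective hNM s
  have hsurj : Function.Surjective (kerToS M s) := by
    have hr : LinearMap.range (kerToS M s) = ⊤ := by
      apply Submodule.eq_top_of_finrank_eq
      rw [LinearMap.finrank_range_of_inj hinj, h,
        Module.finrank_fintype_fun_eq_card, Fintype.card_coe]
    rw [← LinearMap.range_eq_top]
    exact hr
  -- show each column is killed
  have key : ∀ c : ↥s → ℝ, (N.subOn s).mulVec c = 0 := by
    intro c
    obtain ⟨v, hv⟩ := hsurj c
    set w := extZero sᶜ v.val with hwdef
    have hMw : M.mulVec w = extZero s c := by
      funext i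
      by_cases hi : i ∈ s
      · have h1 : M.mulVec w i = kerToS M s v ⟨i, hi⟩ := rfl
        rw [h1, hv, extZero_mem c hi]
      · have hi' : i ∈ sᶜ := Finset.mem_compl.mpr hi
        rw [extZero_notMem c hi]
        rw [hwdef, mulVec_extZero_mem M sᶜ v.val hi']
        have := v.2
        rw [LinearMap.mem_ker, Matrix.mulVecLin_apply] at this
        rw [this]; rfl
    have hwN : w = N.mulVec (extZero s c) := by
      have h2 : N.mulVec (M.mulVec w) = w := by
        rw [Matrix.mulVec_mulVec, hNM, Matrix.one_mulVec]
      rw [← h2, hMw]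
    funext j
    simp only [Pi.zero_apply]
    have h3 : N.mulVec (extZero s c) j.val = (N.subOn s).mulVec c j := by
      rw [mulVec_extZero_mem N s c j.2]
    rw [← h3, ← hwN, hwdef, extZero_notMem v.val (by simpa using j.2)]
  ext i j
  have := congr_fun (key (Pi.single j 1)) i
  rw [Matrix.mulVec_single] at this
  simpa using this


lemma nullity_eq_zero_of_units {M N : Matrix ι ι ℝ} (hNM : N * M = 1) :
    M.nullity = 0 := by
  rw [nullity_eq_finrank_ker]
  have hker : LinearMap.ker M.mulVecLin = ⊥ := by
    rw [eq_bot_iff]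
    intro x hx
    rw [LinearMap.mem_ker, Matrix.mulVecLin_apply] at hx
    have : N.mulVec (M.mulVec x) = x := by
      rw [Matrix.mulVec_mulVec, hNM, Matrix.one_mulVec]
    rw [hx, Matrix.mulVec_zero] at this
    simpa [Submodule.mem_bot] using this.symm
  rw [hker]
  simp

lemma isPSet_iff_subOn_inv {M N : Matrix ι ι ℝ} (hMN : M * N = 1) (hNM : N * M = 1)
    (s : Finset ι) : M.IsPSet s ↔ N.subOn s = 0 := by
  have h0 : M.nullity = 0 := nullity_eq_zero_of_units hNM
  unfold Matrix.IsPSet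
  rw [h0, zero_add, nullity_eq_finrank_ker]
  constructor
  · intro h
    exact subOn_inv_eq_zero hMN hNM s h
  · intro h
    exact le_antisymm (finrank_ker_le hNM s) (le_finrank_ker hMN s h)

end PSetAux

/-- If `M` is a nonsingular symmetric matrix and every two-element subset of a
set `α` of at least two indices is a P-set of `M`, then `α` is a P-set of `M`. -/
theorem nonsingular_all_pairs_suffice {n : ℕ} (M : Matrix (Fin n) (Fin n) ℝ)
    (hM : M.IsSymm) (hMns : IsUnit M.det)
    (α : Finset (Fin n)) (hα : 2 ≤ α.card)
    (hpairs : ∀ γ ⊆ α, γ.card = 2 → M.IsPSet γ) :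
    M.IsPSet α := by
  have hMN : M * M⁻¹ = 1 := Matrix.mul_nonsing_inv M hMns
  have hNM : M⁻¹ * M = 1 := Matrix.nonsing_inv_mul M hMns
  rw [isPSet_iff_subOn_inv hMN hNM]
  have key : ∀ a b : Fin n, a ∈ α → b ∈ α → M⁻¹ a b = 0 := by
    intro a b ha hb
    by_cases hab : a = b
    · subst hab
      obtain ⟨c, hc, hca⟩ := Finset.exists_mem_ne (s := α) (by omega) a
      have hγ : ({a, c} : Finset (Fin n)) ⊆ α := by
        intro x hx
        simp only [Finset.mem_insert, Finset.mem_singleton] at hx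
        rcases hx with rfl | rfl <;> assumption
      have hcard : ({a, c} : Finset (Fin n)).card = 2 := Finset.card_pair hca.symm
      have hz := (isPSet_iff_subOn_inv hMN hNM _).mp (hpairs _ hγ hcard)
      have := congr_fun (congr_fun hz ⟨a, by simp⟩) ⟨a, by simp⟩
      simpa [Matrix.subOn] using this
    · have hγ : ({a, b} : Finset (Fin n)) ⊆ α := by
        intro x hx
        simp only [Finset.mem_insert, Finset.mem_singleton] at hx
        rcases hx with rfl | rfl <;> assumption
      have hcard : ({a, b} : Finset (Fin n)).card = 2 := Finset.card_pair hab
      have hz := (isPSet_iff_subOn_inv hMN hNM _).mp (hpairs _ hγ hcard)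
      have := congr_fun (congr_fun hz ⟨a, by simp⟩) ⟨b, by simp⟩
      simpa [Matrix.subOn] using this
  ext i j
  simpa [Matrix.subOn] using key i.val j.val i.2 j.2
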